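/- arXiv:1703.06075 — 2 statements merged into one kernel-verified Lean document; each statement's English description precedes it below -/
import Mathlib

section
/- Let m, n, q be positive integers such that mnq is even. Then the series Σ_{k=1}^{∞} F_{nk+mnq} / ( Π_{j=0}^{2m} L_{nk+jnq} ) converges, and its sum equals (1 / (5 F_{mnq})) · Σ_{k=1}^{q} 1 / ( Π_{j=0}^{2m−1} L_{nk+jnq} ). -/
open Filter Topology

/-- The Lucas numbers: `L 0 = 2`, `L 1 = 1`, `L (n+2) = L (n+1) + L n`. -/
def lucas : ℕ → ℕ
  | 0 => 2
  | 1 => 1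
  | n + 2 => lucas (n + 1) + lucas n

/-!
By Binet's formulas, `L (x + 2b) = 5 F b F (x + b) + (-1)^b L x`. With `b = mnq` even, `x = nk`
and `P r k = ∏_{j<r} L (nk + jnq)`, splitting the last or the first factor off `P (2m+1) k` gives
`1 / P (2m) k - 1 / P (2m) (k + q) = 5 F (mnq) F (nk + mnq) / P (2m+1) k`, so the series
telescopes with step `q`; the tail tends to 0 because `P (2m) k ≥ L (nk) ≥ nk`.
-/

open Finset Real goldenRatio

theorem Finset.sum_range_sub_shift {G : Type*} [AddCommGroup G] (g : ℕ → G) (q N : ℕ) :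
    ∑ k ∈ range N, (g k - g (k + q)) = ∑ k ∈ range q, (g k - g (N + k)) := by
  have step (k : ℕ) : g k - g (k + q) = ∑ i ∈ range q, (g (k + i) - g (k + 1 + i)) := by
    simpa [add_assoc, add_comm 1] using (sum_range_sub' (fun i => g (k + i)) q).symm
  simp_rw [step]
  rw [sum_comm]
  refine sum_congr rfl fun i _ => ?_
  simpa [add_comm] using sum_range_sub' (fun k => g (k + i)) N

theorem Finset.sum_Icc_one_eq_sum_range {M : Type*} [AddCommMonoid M] (f : ℕ → M) (N : ℕ) :
    ∑ k ∈ Icc 1 N, f k = ∑ k ∈ range N, f (k + 1) := by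
  rw [range_eq_Ico, sum_Ico_add', ← Ico_add_one_right_eq_Icc]

lemma tendsto_sum_Icc_sub_shift {G : Type*} [AddCommGroup G] [TopologicalSpace G]
    [IsTopologicalAddGroup G] {g : ℕ → G} (hg : Tendsto g atTop (𝓝 0)) (q : ℕ) :
    Tendsto (fun N => ∑ k ∈ Icc 1 N, (g k - g (k + q))) atTop (𝓝 (∑ k ∈ Icc 1 q, g k)) := by
  simp_rw [sum_Icc_one_eq_sum_range, add_right_comm _ 1 q,
    sum_range_sub_shift (fun k => g (k + 1))]
  have hk (k : ℕ) : Tendsto (fun N => g (k + 1) - g (N + k + 1)) atTop (𝓝 (g (k + 1) - 0)) :=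
    tendsto_const_nhds.sub (hg.comp (tendsto_add_atTop_nat (k + 1)))
  simpa using tendsto_finsetSum (range q) fun k _ => hk k

lemma lucas_add_two (n : ℕ) : lucas (n + 2) = lucas (n + 1) + lucas n := rfl

lemma lucas_pos (n : ℕ) : 0 < lucas n := by
  induction n using Nat.twoStepInduction with
  | zero | one => decide
  | more n h₀ h₁ => rw [lucas_add_two]; omega

lemma self_le_lucas (n : ℕ) : n ≤ lucas n := by
  induction n using Nat.twoStepInduction with
  | zero | one => decide
  | more n ih₀ ih₁ => have := lucas_pos n; rw [lucas_add_two]; omega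

lemma tendsto_lucas_atTop : Tendsto lucas atTop atTop :=
  tendsto_atTop_mono self_le_lucas tendsto_id

lemma coe_lucas_eq (n : ℕ) : (lucas n : ℝ) = φ ^ n + ψ ^ n := by
  induction n using Nat.twoStepInduction with
  | zero => norm_num [lucas]
  | one => simp [lucas, goldenRatio_add_goldenConj]
  | more n ih₀ ih₁ =>
    rw [lucas_add_two, Nat.cast_add, ih₀, ih₁]
    have hφ := goldenRatio_sq
    have hψ := goldenConj_sq
    generalize φ = a at *
    generalize ψ = c at *
    linear_combination -a ^ n * hφ - c ^ n * hψ

lemma coe_lucas_add_two_mul (x b : ℕ) :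
    (lucas (x + 2 * b) : ℝ) = 5 * Nat.fib b * Nat.fib (x + b) + (-1) ^ b * lucas x := by
  have h5 : (5 : ℝ) = √5 ^ 2 := (Real.sq_sqrt (by norm_num)).symm
  have h0 : √5 ≠ 0 := by positivity
  rw [h5, coe_lucas_eq, coe_lucas_eq, coe_fib_eq, coe_fib_eq, ← goldenRatio_mul_goldenConj]
  generalize φ = a
  generalize ψ = c
  field_simp
  ring

def lucasProd (x d r : ℕ) : ℕ := ∏ j ∈ range r, lucas (x + j * d)

lemma lucasProd_succ (x d r : ℕ) :
    lucasProd x d (r + 1) = lucasProd x d r * lucas (x + r * d) :=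
  prod_range_succ _ _

lemma lucasProd_succ' (x d r : ℕ) :
    lucasProd x d (r + 1) = lucas x * lucasProd (x + d) d r := by
  simp only [lucasProd, prod_range_succ', zero_mul, add_zero, mul_comm (lucas x)]
  congr! 3 with j
  ring

lemma lucas_le_lucasProd (x d : ℕ) {r : ℕ} (hr : 0 < r) : lucas x ≤ lucasProd x d r := by
  simpa [lucasProd] using
    single_le_prod' (f := fun j => lucas (x + j * d)) (fun j _ => lucas_pos _) (mem_range.2 hr)

lemma tendsto_lucasProd_atTop {n : ℕ} (hn : 0 < n) (d : ℕ) {r : ℕ} (hr : 0 < r) :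
    Tendsto (fun k => lucasProd (n * k) d r) atTop atTop := by
  have hnk : Tendsto (fun k => n * k) atTop atTop :=
    tendsto_atTop_mono (fun k => Nat.le_mul_of_pos_left k hn) tendsto_id
  exact tendsto_atTop_mono (fun k => lucas_le_lucasProd _ d hr) (tendsto_lucas_atTop.comp hnk)

lemma fib_div_lucasProd_eq (x d m : ℕ) (hmd : 0 < m * d) (heven : Even (m * d)) :
    (Nat.fib (x + m * d) : ℝ) / lucasProd x d (2 * m + 1) =
      (5 * (Nat.fib (m * d) : ℝ))⁻¹ *
        ((lucasProd x d (2 * m) : ℝ)⁻¹ - (lucasProd (x + d) d (2 * m) : ℝ)⁻¹) := by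
  have hL := coe_lucas_add_two_mul x (m * d)
  rw [heven.neg_one_pow, one_mul, ← mul_assoc] at hL
  have hlast : (lucas (x + 2 * m * d) : ℝ) / lucasProd x d (2 * m + 1) =
      (lucasProd x d (2 * m) : ℝ)⁻¹ := by
    rw [lucasProd_succ, Nat.cast_mul, div_mul_cancel_right₀ (by exact_mod_cast (lucas_pos _).ne')]
  have hfirst : (lucas x : ℝ) / lucasProd x d (2 * m + 1) =
      (lucasProd (x + d) d (2 * m) : ℝ)⁻¹ := by
    rw [lucasProd_succ', Nat.cast_mul, div_mul_cancel_left₀ (by exact_mod_cast (lucas_pos _).ne')]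
  have hF : (5 * (Nat.fib (m * d) : ℝ)) ≠ 0 := by
    have := Nat.fib_pos.2 hmd
    positivity
  rw [← hlast, ← hfirst, ← sub_div, hL, add_sub_cancel_right, mul_div_assoc,
    inv_mul_cancel_left₀ hF]

/-- Theorem (`mnq` even):
`Σ_{k=1}^{∞} F_{nk+mnq} / (Π_{j=0}^{2m} L_{nk+jnq})
  = (1/(5F_{mnq})) Σ_{k=1}^{q} 1/(Π_{j=0}^{2m−1} L_{nk+jnq})`. -/
theorem stmt_14 (m n q : ℕ) (hm : 0 < m) (hn : 0 < n) (hq : 0 < q)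
    (heven : Even (m * n * q)) :
    Tendsto (fun N => ∑ k ∈ Finset.Icc 1 N,
        (Nat.fib (n * k + m * n * q) : ℝ) /
          ∏ j ∈ Finset.range (2 * m + 1), (lucas (n * k + j * n * q) : ℝ))
      atTop
      (𝓝 ((1 / (5 * (Nat.fib (m * n * q) : ℝ))) *
        ∑ k ∈ Finset.Icc 1 q,
          (1 : ℝ) / ∏ j ∈ Finset.range (2 * m), (lucas (n * k + j * n * q) : ℝ))) := by
  rw [mul_assoc] at heven
  set g : ℕ → ℝ := fun k => (lucasProd (n * k) (n * q) (2 * m) : ℝ)⁻¹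
  have hg : Tendsto g atTop (𝓝 0) := tendsto_inv_atTop_zero.comp
    (tendsto_natCast_atTop_atTop.comp (tendsto_lucasProd_atTop hn _ (by positivity)))
  have hterm (k : ℕ) :
      (Nat.fib (n * k + m * (n * q)) : ℝ) / lucasProd (n * k) (n * q) (2 * m + 1) =
        (5 * (Nat.fib (m * (n * q)) : ℝ))⁻¹ * (g k - g (k + q)) := by
    rw [fib_div_lucasProd_eq _ _ _ (by positivity) heven, ← mul_add]
  simp only [mul_assoc, ← Nat.cast_prod, ← lucasProd.eq_def, hterm, ← mul_sum, one_div]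
  exact (tendsto_sum_Icc_sub_shift hg q).const_mul _
end

section
/- Let m, n, q be positive integers such that mnq is even, and let p be a non-negative integer. Then the series Σ_{k=1}^{∞} F_{2nk+mnq+np} / ( Π_{j=0}^{m} ( F_{nk+jnq} · F_{nk+jnq+np} ) ) converges, and its sum equals (1 / F_{mnq}) · Σ_{k=1}^{q} 1 / ( Π_{j=0}^{m−1} ( F_{nk+jnq} · F_{nk+jnq+np} ) ). -/
/-!
For even `c` one has `F_{a+c} F_{b+c} = F_a F_b + F_c F_{a+b+c}` (Binet, using `φ^c ψ^c = 1`).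
With `a = nk`, `b = nk + np`, `c = mnq` it shows that `F_{mnq}` times the `k`-th term equals
`u_k - u_{k+q}`, where `u_k = 1 / ∏_{j<m} F_{nk+jnq} F_{nk+jnq+np}`: the product over `j ≤ m`
is the product defining `u_k` times its factor `j = m`, and also the one defining `u_{k+q}` times
its factor `j = 0`. So the series telescopes with step `q`, and as `u_k → 0` its partial sums
tend to `(u_1 + ⋯ + u_q) / F_{mnq}`.
-/

open Filter Topology Finset Nat

theorem Nat.fib_add_mul_fib_add_of_even (a b : ℕ) {c : ℕ} (hc : Even c) :
    fib (a + c) * fib (b + c) = fib a * fib b + fib c * fib (a + b + c) := by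
  have hconj : Real.goldenRatio ^ c * Real.goldenConj ^ c = 1 := by
    rw [← mul_pow, Real.goldenRatio_mul_goldenConj, hc.neg_one_pow]
  apply Nat.cast_injective (R := ℝ)
  push_cast
  simp only [Real.coe_fib_eq, pow_add]
  generalize Real.goldenRatio = x at *
  generalize Real.goldenConj = y at *
  have h5 : √5 ≠ 0 := by positivity
  field_simp
  linear_combination (x ^ a * x ^ b + y ^ a * y ^ b - x ^ a * y ^ b - y ^ a * x ^ b) * hconj

theorem Nat.tendsto_fib_atTop : Tendsto fib atTop atTop :=
  tendsto_atTop_atTop_of_monotone fib_mono fun b =>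
    ⟨b + 1, by linarith [le_fib_add_one (b + 1)]⟩

theorem one_div_prod_range_sub_one_div_prod_range_succ {K : Type*} [Field K] (x : ℕ → K)
    (m : ℕ) (hx : ∏ j ∈ range (m + 1), x j ≠ 0) :
    1 / ∏ j ∈ range m, x j - 1 / ∏ j ∈ range m, x (j + 1) =
      (x m - x 0) / ∏ j ∈ range (m + 1), x j := by
  have hxm : x m ≠ 0 := prod_ne_zero_iff.1 hx m (self_mem_range_succ m)
  have hx0 : x 0 ≠ 0 := prod_ne_zero_iff.1 hx 0 (mem_range.2 m.succ_pos)
  rw [sub_div, prod_range_succ, div_mul_cancel_right₀ hxm, ← prod_range_succ,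
    prod_range_succ', div_mul_cancel_right₀ hx0, one_div, one_div]

theorem tendsto_sum_range_sub_shift {M : Type*} [AddCommGroup M] [TopologicalSpace M]
    [IsTopologicalAddGroup M] {f : ℕ → M} (hf : Tendsto f atTop (𝓝 0)) (q : ℕ) :
    Tendsto (fun N => ∑ k ∈ range N, (f k - f (k + q))) atTop
      (𝓝 (∑ k ∈ range q, f k)) := by
  have h : ∀ N, ∑ k ∈ range N, (f k - f (k + q)) =
      ∑ k ∈ range q, f k - ∑ k ∈ range q, f (N + k) := by
    intro N
    have h₁ := sum_range_add f N q
    rw [add_comm N q, sum_range_add] at h₁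
    rw [sum_sub_distrib]
    simp only [add_comm _ q]
    rw [eq_sub_of_add_eq' h₁]
    abel
  simp only [h]
  simpa using tendsto_const_nhds.sub (tendsto_finsetSum (range q) fun k _ =>
    hf.comp (tendsto_add_atTop_nat k))

section FibDenom

variable (n q p : ℕ)

def fibDenom (m k : ℕ) : ℝ :=
  ∏ j ∈ range m, ((fib (n * k + j * n * q) : ℝ) * (fib (n * k + j * n * q + n * p) : ℝ))

variable {n}

theorem one_le_fibDenom_factor {k : ℕ} (hnk : 0 < n * k) (j : ℕ) :
    1 ≤ (fib (n * k + j * n * q) : ℝ) * (fib (n * k + j * n * q + n * p) : ℝ) :=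
  one_le_mul_of_one_le_of_one_le (one_le_cast.2 (fib_pos.2 (by positivity)))
    (one_le_cast.2 (fib_pos.2 (by positivity)))

theorem fib_mul_div_fibDenom_succ {m k : ℕ} (heven : Even (m * n * q)) (hnk : 0 < n * k) :
    fib (m * n * q) * (fib (2 * n * k + m * n * q + n * p) / fibDenom n q p (m + 1) k) =
      1 / fibDenom n q p m k - 1 / fibDenom n q p m (k + q) := by
  have hshift : fibDenom n q p m (k + q) = ∏ j ∈ range m,
      (fib (n * k + (j + 1) * n * q) : ℝ) * (fib (n * k + (j + 1) * n * q + n * p) : ℝ) := by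
    simp only [fibDenom, show ∀ j, n * (k + q) + j * n * q = n * k + (j + 1) * n * q from
      fun j => by ring]
  have hident := fib_add_mul_fib_add_of_even (n * k) (n * k + n * p) heven
  rw [hshift, fibDenom, fibDenom, one_div_prod_range_sub_one_div_prod_range_succ, mul_div_assoc']
  · congr 1
    simp only [zero_mul, add_zero]
    rw [show n * k + n * p + m * n * q = n * k + m * n * q + n * p by ring,
      show n * k + (n * k + n * p) + m * n * q = 2 * n * k + m * n * q + n * p by ring] at hident
    have := congrArg (Nat.cast (R := ℝ)) hident
    push_cast at this
    linarith
  · exact (prod_pos fun j _ => zero_lt_one.trans_le (one_le_fibDenom_factor q p hnk j)).ne'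

theorem tendsto_one_div_fibDenom {m : ℕ} (hm : 0 < m) (hn : 0 < n) :
    Tendsto (fun k => 1 / fibDenom n q p m k) atTop (𝓝 0) := by
  have hle : ∀ᶠ k in atTop, (fib (n * k) : ℝ) ≤ fibDenom n q p m k := by
    filter_upwards [eventually_ge_atTop 1] with k hk
    have hnk : 0 < n * k := by positivity
    obtain ⟨t, rfl⟩ := exists_add_one_eq.2 hm
    rw [fibDenom, prod_range_succ']
    calc (fib (n * k) : ℝ) ≤ fib (n * k) * fib (n * k + n * p) :=
          le_mul_of_one_le_right (cast_nonneg _) (one_le_cast.2 (fib_pos.2 (by positivity)))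
      _ ≤ _ := by
          simp only [zero_mul, add_zero]
          exact le_mul_of_one_le_left (by positivity)
            (one_le_prod fun j _ => one_le_fibDenom_factor q p hnk _)
  have hfib : Tendsto (fun k => (fib (n * k) : ℝ)) atTop atTop :=
    tendsto_natCast_atTop_atTop.comp (tendsto_fib_atTop.comp (tendsto_id.const_mul_atTop' hn))
  exact tendsto_const_nhds.div_atTop (tendsto_atTop_mono' _ hle hfib)

end FibDenom

/-- Theorem (`mnq` even, `p ≥ 0`):
`Σ_{k=1}^{∞} F_{2nk+mnq+np} / (Π_{j=0}^{m} F_{nk+jnq} F_{nk+jnq+np})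
  = (1/F_{mnq}) Σ_{k=1}^{q} 1/(Π_{j=0}^{m−1} F_{nk+jnq} F_{nk+jnq+np})`. -/
theorem stmt_19 (m n q p : ℕ) (hm : 0 < m) (hn : 0 < n) (hq : 0 < q)
    (heven : Even (m * n * q)) :
    Tendsto (fun N => ∑ k ∈ Finset.Icc 1 N,
        (Nat.fib (2 * n * k + m * n * q + n * p) : ℝ) /
          ∏ j ∈ Finset.range (m + 1),
            ((Nat.fib (n * k + j * n * q) : ℝ) * (Nat.fib (n * k + j * n * q + n * p) : ℝ)))
      atTop
      (𝓝 ((1 / (Nat.fib (m * n * q) : ℝ)) *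
        ∑ k ∈ Finset.Icc 1 q,
          (1 : ℝ) / ∏ j ∈ Finset.range m,
            ((Nat.fib (n * k + j * n * q) : ℝ) * (Nat.fib (n * k + j * n * q + n * p) : ℝ)))) := by
  have sum_Icc_one (g : ℕ → ℝ) (N : ℕ) :
      ∑ k ∈ Icc 1 N, g k = ∑ k ∈ range N, g (k + 1) := by
    rw [← Ico_add_one_right_eq_Icc, sum_Ico_eq_sum_range]
    simp [add_comm]
  have hF : (fib (m * n * q) : ℝ) ≠ 0 := cast_ne_zero.2 (fib_pos.2 (by positivity)).ne'
  have hterm (k : ℕ) :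
      (fib (2 * n * (k + 1) + m * n * q + n * p) : ℝ) / fibDenom n q p (m + 1) (k + 1) =
        1 / fib (m * n * q) *
          (1 / fibDenom n q p m (k + 1) - 1 / fibDenom n q p m (k + q + 1)) := by
    rw [add_right_comm k q, ← fib_mul_div_fibDenom_succ q p heven (by positivity), ← mul_assoc,
      one_div_mul_cancel hF, one_mul]
  have hlim := (tendsto_sum_range_sub_shift ((tendsto_one_div_fibDenom q p hm hn).comp
    (tendsto_add_atTop_nat 1)) q).const_mul (1 / (fib (m * n * q) : ℝ))
  simp only [Function.comp_apply, mul_sum, ← hterm] at hlim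
  simp only [sum_Icc_one, mul_sum]
  exact hlim
end
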